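/- Weighted Ladyzhenskaya-type inequality: let F : ℝ → [0,∞) be bounded, even, and nondecreasing on [0,∞), and let φ : ℝ → ℂ be continuously differentiable with φ and φ′ square-integrable and φ(x) → 0 as |x| → ∞ (for instance φ Schwartz). Then for every x ∈ ℝ: F(x)² |φ(x)|² ≤ 2 ‖F·φ′‖_{L²(ℝ)} · ‖F·φ‖_{L²(ℝ)}. In particular sup_x F(x)²|φ(x)|² ≤ 2 ‖F∂_xφ‖_{L²} ‖Fφ‖_{L²}. -/

import Mathlib

open MeasureTheory Real Complex Filter Topology

/-- The `L²(ℝ)` norm of a complex-valued function. -/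
noncomputable def L2norm (f : ℝ → ℂ) : ℝ := Real.sqrt (∫ x : ℝ, ‖f x‖ ^ 2)

/-!
Write `g = ‖φ‖²`, so that `|g'| ≤ 2 ‖φ‖ ‖φ'‖` and `g` vanishes at `±∞`. For `x ≥ 0`,
`g(x) = -∫_{y > x} g'(y)`, and `F(x) ≤ F(y)` for `y > x` since `F` is even and nondecreasing
in `|x|`; hence `F(x)² g(x) ≤ ∫ F² |g'| ≤ 2 ∫ ‖F φ'‖ ‖F φ‖`. For `x < 0` integrate over
`(-∞, x]` instead. Cauchy–Schwarz bounds the last integral by `‖F φ'‖_{L²} ‖F φ‖_{L²}`.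
-/

open Set

namespace Function.Even

variable {F : ℝ → ℝ}

lemma apply_abs (hF : Function.Even F) (x : ℝ) : F |x| = F x := by
  rcases abs_choice x with h | h <;> rw [h]
  exact hF x

lemma apply_le_of_abs_le (hF : Function.Even F) (hmono : MonotoneOn F (Ici 0)) {x y : ℝ}
    (hxy : |x| ≤ |y|) : F x ≤ F y := by
  rw [← hF.apply_abs x, ← hF.apply_abs y]
  exact hmono (abs_nonneg x) (abs_nonneg y) hxy

lemma measurable_of_monotoneOn_Ici (hF : Function.Even F) (hmono : MonotoneOn F (Ici 0)) :
    Measurable F := by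
  have hG : Monotone fun y : ℝ => F (max y 0) := fun a b hab =>
    hmono (le_max_right a 0) (le_max_right b 0) (max_le_max hab le_rfl)
  have hFG : F = (fun y : ℝ => F (max y 0)) ∘ abs := by
    funext x
    simp only [Function.comp_apply, max_eq_left (abs_nonneg x), hF.apply_abs]
  rw [hFG]
  exact hG.measurable.comp measurable_abs

end Function.Even

section HalfLine

variable {g g' B : ℝ → ℝ} {x c : ℝ}

lemma mul_le_setIntegral_Ioi_of_hasDerivAt_of_tendsto (hg : ∀ y ∈ Ici x, HasDerivAt g (g' y) y)
    (hg' : IntegrableOn g' (Ioi x)) (hlim : Tendsto g atTop (𝓝 0)) (hB : IntegrableOn B (Ioi x))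
    (hle : ∀ y ∈ Ioi x, c * -g' y ≤ B y) :
    c * g x ≤ ∫ y in Ioi x, B y := by
  have hftc : g x = ∫ y in Ioi x, -g' y := by
    rw [integral_neg, integral_Ioi_of_hasDerivAt_of_tendsto' hg hg' hlim]
    ring
  rw [hftc, ← integral_const_mul]
  exact setIntegral_mono_on (hg'.neg.const_mul c) hB measurableSet_Ioi hle

lemma mul_le_setIntegral_Iic_of_hasDerivAt_of_tendsto (hg : ∀ y ∈ Iic x, HasDerivAt g (g' y) y)
    (hg' : IntegrableOn g' (Iic x)) (hlim : Tendsto g atBot (𝓝 0)) (hB : IntegrableOn B (Iic x))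
    (hle : ∀ y ∈ Iic x, c * g' y ≤ B y) :
    c * g x ≤ ∫ y in Iic x, B y := by
  have hftc : g x = ∫ y in Iic x, g' y := by
    rw [integral_Iic_of_hasDerivAt_of_tendsto' hg hg' hlim, sub_zero]
  rw [hftc, ← integral_const_mul]
  exact setIntegral_mono_on (hg'.const_mul c) hB measurableSet_Iic hle

end HalfLine

lemma sq_mul_norm_sq_le_two_mul_integral {E : Type*} [NormedAddCommGroup E] [InnerProductSpace ℝ E]
    {F : ℝ → ℝ} (hFnonneg : ∀ x, 0 ≤ F x) (hFeven : Function.Even F)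
    (hFmono : MonotoneOn F (Ici 0)) {φ : ℝ → E} (hφ : Differentiable ℝ φ)
    (hφ0 : Tendsto φ (cocompact ℝ) (𝓝 0)) (hint : Integrable fun y => ‖deriv φ y‖ * ‖φ y‖)
    (hFint : Integrable fun y => F y ^ 2 * (‖deriv φ y‖ * ‖φ y‖)) (x : ℝ) :
    F x ^ 2 * ‖φ x‖ ^ 2 ≤ 2 * ∫ y, F y ^ 2 * (‖deriv φ y‖ * ‖φ y‖) := by
  set g : ℝ → ℝ := fun y => ‖φ y‖ ^ 2
  set g' : ℝ → ℝ := fun y => 2 * inner ℝ (φ y) (deriv φ y)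
  have hg (y : ℝ) : HasDerivAt g (g' y) y := (hφ y).hasDerivAt.norm_sq
  have hg'le (y : ℝ) : |g' y| ≤ 2 * (‖deriv φ y‖ * ‖φ y‖) := by
    rw [abs_mul, abs_two, mul_comm ‖deriv φ y‖]
    exact mul_le_mul_of_nonneg_left (abs_real_inner_le_norm _ _) zero_le_two
  have hg'meas : Measurable g' := by
    rw [← funext fun y => (hg y).deriv]
    exact measurable_deriv g
  have hg'int : Integrable g' :=
    (hint.const_mul 2).mono' hg'meas.aestronglyMeasurable (ae_of_all _ hg'le)
  have hBint := hFint.const_mul 2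
  have hweight {y : ℝ} (hxy : |x| ≤ |y|) :
      F x ^ 2 * |g' y| ≤ 2 * (F y ^ 2 * (‖deriv φ y‖ * ‖φ y‖)) := by
    have hF2 : F x ^ 2 ≤ F y ^ 2 :=
      pow_le_pow_left₀ (hFnonneg x) (hFeven.apply_le_of_abs_le hFmono hxy) 2
    rw [mul_left_comm]
    exact mul_le_mul hF2 (hg'le y) (abs_nonneg _) (sq_nonneg _)
  have hglim : Tendsto g (atBot ⊔ atTop) (𝓝 0) := by
    rw [← cocompact_eq_atBot_atTop]
    simpa [g] using (hφ0.norm.pow 2)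
  have hBnonneg : 0 ≤ᵐ[volume] fun y => 2 * (F y ^ 2 * (‖deriv φ y‖ * ‖φ y‖)) :=
    ae_of_all _ fun y => by positivity
  rw [← integral_const_mul]
  rcases le_or_gt 0 x with hx | hx
  · refine (mul_le_setIntegral_Ioi_of_hasDerivAt_of_tendsto (fun y _ => hg y)
      hg'int.integrableOn (hglim.mono_left le_sup_right) hBint.integrableOn
      fun y hy => ?_).trans (setIntegral_le_integral hBint hBnonneg)
    refine (mul_le_mul_of_nonneg_left (neg_le_abs _) (sq_nonneg _)).trans (hweight ?_)
    rw [abs_of_nonneg hx, abs_of_pos (hx.trans_lt hy)]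
    exact hy.le
  · refine (mul_le_setIntegral_Iic_of_hasDerivAt_of_tendsto (fun y _ => hg y)
      hg'int.integrableOn (hglim.mono_left le_sup_left) hBint.integrableOn
      fun y hy => ?_).trans (setIntegral_le_integral hBint hBnonneg)
    refine (mul_le_mul_of_nonneg_left (le_abs_self _) (sq_nonneg _)).trans (hweight ?_)
    rw [abs_of_neg hx, abs_of_neg (lt_of_le_of_lt hy hx)]
    exact neg_le_neg hy

lemma integral_norm_mul_norm_le_L2norm_mul_L2norm {u v : ℝ → ℂ} (hu : MemLp u 2) (hv : MemLp v 2) :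
    ∫ y, ‖u y‖ * ‖v y‖ ≤ L2norm u * L2norm v := by
  have hL2norm (w : ℝ → ℂ) : L2norm w = (∫ y, ‖w y‖ ^ (2 : ℝ)) ^ (1 / (2 : ℝ)) := by
    simp only [L2norm, Real.sqrt_eq_rpow, Real.rpow_two]
  rw [hL2norm, hL2norm]
  refine integral_mul_le_Lp_mul_Lq_of_nonneg Real.HolderConjugate.two_two
    (ae_of_all _ fun y => norm_nonneg _) (ae_of_all _ fun y => norm_nonneg _) ?_ ?_
  · simpa only [ENNReal.ofReal_ofNat] using hu.norm
  · simpa only [ENNReal.ofReal_ofNat] using hv.norm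

lemma MeasureTheory.MemLp.ofReal_mul {α : Type*} [MeasurableSpace α] {μ : Measure α}
    {F : α → ℝ} {ψ : α → ℂ} {p : ENNReal} (hF : MemLp F ⊤ μ) (hψ : MemLp ψ p μ) :
    MemLp (fun y => (F y : ℂ) * ψ y) p μ :=
  hψ.mul (hF.ofReal (K := ℂ))

/-- weighted Ladyzhenskaya-type inequality. Let `F : ℝ → [0,∞)`
be bounded, even, and nondecreasing on `[0,∞)`, and let `φ : ℝ → ℂ` be `C¹` with
`φ, φ′ ∈ L²` and `φ(x) → 0` as `|x| → ∞`. Then for every `x`,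
`F(x)² |φ(x)|² ≤ 2 ‖F φ′‖_{L²} ‖F φ‖_{L²}`, and in particular the same bound
holds for `sup_x F(x)²|φ(x)|²`. -/
theorem weighted_Ladyzhenskaya
    (F : ℝ → ℝ) (hFnonneg : ∀ x, 0 ≤ F x) (hFbdd : ∃ M : ℝ, ∀ x, F x ≤ M)
    (hFeven : ∀ x, F (-x) = F x) (hFmono : MonotoneOn F (Set.Ici (0:ℝ)))
    (φ : ℝ → ℂ) (hφ : ContDiff ℝ 1 φ)
    (hφL2 : MemLp φ 2 (volume : Measure ℝ))
    (hφ'L2 : MemLp (deriv φ) 2 (volume : Measure ℝ))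
    (hφ0 : Tendsto (fun x : ℝ => φ x) (cocompact ℝ) (nhds 0)) :
    (∀ x : ℝ, F x ^ 2 * ‖φ x‖ ^ 2 ≤
      2 * L2norm (fun y => (F y : ℂ) * deriv φ y) * L2norm (fun y => (F y : ℂ) * φ y)) ∧
    (⨆ x : ℝ, F x ^ 2 * ‖φ x‖ ^ 2) ≤
      2 * L2norm (fun y => (F y : ℂ) * deriv φ y) * L2norm (fun y => (F y : ℂ) * φ y) := by
  obtain ⟨M, hM⟩ := hFbdd
  have hF : MemLp F ⊤ := memLp_top_of_bound
    (Function.Even.measurable_of_monotoneOn_Ici hFeven hFmono).aestronglyMeasurable M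
    (ae_of_all _ fun y => (Real.norm_of_nonneg (hFnonneg y)).trans_le (hM y))
  have hFφ' := hF.ofReal_mul hφ'L2
  have hFφ := hF.ofReal_mul hφL2
  have hweighted : (fun y => F y ^ 2 * (‖deriv φ y‖ * ‖φ y‖)) =
      fun y => ‖(F y : ℂ) * deriv φ y‖ * ‖(F y : ℂ) * φ y‖ := by
    funext y
    simp only [norm_mul, Complex.norm_real, Real.norm_of_nonneg (hFnonneg y)]
    ring
  have hbound (x : ℝ) := sq_mul_norm_sq_le_two_mul_integral hFnonneg hFeven hFmono
    (hφ.differentiable one_ne_zero) hφ0 (hφ'L2.norm.integrable_mul hφL2.norm)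
    (hweighted ▸ hFφ'.norm.integrable_mul hFφ.norm) x
  have hmain (x : ℝ) : F x ^ 2 * ‖φ x‖ ^ 2 ≤
      2 * L2norm (fun y => (F y : ℂ) * deriv φ y) * L2norm (fun y => (F y : ℂ) * φ y) := by
    rw [mul_assoc]
    refine (hbound x).trans (mul_le_mul_of_nonneg_left ?_ zero_le_two)
    rw [hweighted]
    exact integral_norm_mul_norm_le_L2norm_mul_L2norm hFφ' hFφ
  exact ⟨hmain, ciSup_le hmain⟩
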